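/- Let F : ℂ^{k+1} → ℂ^{k+1} have coordinates that are homogeneous polynomials of degree d, lifting a dominant rational map f of ℙ^k. For n ≥ 1 let H^{(n)} be the greatest common divisor of the coordinates of F^{∘n}, so that F^{∘n} = H^{(n)}·Ḟ^{(n)} with deg Ḟ^{(n)} = deg f^{∘n}. Then for all m, n ≥ 1, (H^{(n)})^{d^m} divides H^{(n+m)}. -/

import Mathlib

/-!
Write the coordinates of `F^{∘n}` as `H⁽ⁿ⁾ * Qᵢ`. Since `F^{∘(n+m)} = F^{∘m} ∘ F^{∘n}` and the
coordinates of `F^{∘m}` are homogeneous of degree `d^m`, substituting `H⁽ⁿ⁾ * Q` pulls out the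
factor `(H⁽ⁿ⁾)^{d^m}` from every coordinate of `F^{∘(n+m)}`, hence from their gcd.
-/

open MvPolynomial

noncomputable section

variable {k : ℕ}

/-- Composition of polynomial self-maps of `ℂ^{k+1}`: `(G ∘ F) i = G i (F 0, …, F k)`. -/
def polyComp (G F : Fin (k + 1) → MvPolynomial (Fin (k + 1)) ℂ) :
    Fin (k + 1) → MvPolynomial (Fin (k + 1)) ℂ :=
  fun i => MvPolynomial.bind₁ F (G i)

/-- The `n`-fold iterate `F^{∘n}` of a polynomial self-map of `ℂ^{k+1}`. -/
def polyIter (F : Fin (k + 1) → MvPolynomial (Fin (k + 1)) ℂ) :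
    ℕ → Fin (k + 1) → MvPolynomial (Fin (k + 1)) ℂ
  | 0 => fun i => MvPolynomial.X i
  | n + 1 => polyComp (polyIter F n) F

/-- `H` is a greatest common divisor of the family of polynomials `P`. -/
def IsGCDOf (H : MvPolynomial (Fin (k + 1)) ℂ)
    (P : Fin (k + 1) → MvPolynomial (Fin (k + 1)) ℂ) : Prop :=
  (∀ i, H ∣ P i) ∧ ∀ H' : MvPolynomial (Fin (k + 1)) ℂ, (∀ i, H' ∣ P i) → H' ∣ H

namespace MvPolynomial.IsHomogeneous

variable {σ R A : Type*} [CommSemiring R] [CommSemiring A] [Algebra R A]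
  {p : MvPolynomial σ R} {e : ℕ}

theorem aeval_mul_left (hp : p.IsHomogeneous e) (c : A) (g : σ → A) :
    MvPolynomial.aeval (fun j => c * g j) p = c ^ e * MvPolynomial.aeval g p := by
  conv_lhs => rw [p.as_sum]
  conv_rhs => rw [p.as_sum]
  simp only [map_sum, Finset.mul_sum, aeval_monomial, Finsupp.prod, mul_pow,
    Finset.prod_mul_distrib, Finset.prod_pow_eq_pow_sum]
  refine Finset.sum_congr rfl fun s hs => ?_
  rw [← hp.degree_eq_sum_deg_support hs]
  ring

theorem pow_dvd_aeval (hp : p.IsHomogeneous e) {c : A} {g : σ → A} (hg : ∀ j, c ∣ g j) :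
    c ^ e ∣ MvPolynomial.aeval g p := by
  choose q hq using hg
  obtain rfl : g = fun j => c * q j := by ext j; exact hq j
  exact ⟨_, hp.aeval_mul_left c q⟩

end MvPolynomial.IsHomogeneous

theorem polyIter_add (F : Fin (k + 1) → MvPolynomial (Fin (k + 1)) ℂ) (a b : ℕ) :
    polyIter F (a + b) = polyComp (polyIter F a) (polyIter F b) := by
  induction b with
  | zero => ext1 i; simp [polyIter, polyComp]
  | succ b ih =>
    ext1 i
    change bind₁ F (polyIter F (a + b) i) = bind₁ (fun j => bind₁ F (polyIter F b j)) _
    rw [ih, polyComp, bind₁_bind₁]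

theorem polyIter_isHomogeneous {d : ℕ} {F : Fin (k + 1) → MvPolynomial (Fin (k + 1)) ℂ}
    (hF : ∀ i, (F i).IsHomogeneous d) (n : ℕ) (i : Fin (k + 1)) :
    (polyIter F n i).IsHomogeneous (d ^ n) := by
  induction n with
  | zero => simpa [polyIter] using isHomogeneous_X ℂ i
  | succ n ih => simpa [polyIter, polyComp, pow_succ', mul_comm] using ih.aeval F hF

theorem gcd_iterate_divides_general
    (d : ℕ)
    (F : Fin (k + 1) → MvPolynomial (Fin (k + 1)) ℂ)
    (hhom : ∀ i, (F i).IsHomogeneous d)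
    (n m : ℕ)
    (Hn Hnm : MvPolynomial (Fin (k + 1)) ℂ)
    (hHn : IsGCDOf Hn (polyIter F n)) (hHnm : IsGCDOf Hnm (polyIter F (n + m))) :
    Hn ^ d ^ m ∣ Hnm := by
  refine hHnm.2 _ fun i => ?_
  rw [Nat.add_comm n m, polyIter_add]
  exact IsHomogeneous.pow_dvd_aeval (polyIter_isHomogeneous hhom m i) hHn.1

/-- **Divisibility of the gcd's of the iterates.**
Let `F : ℂ^{k+1} → ℂ^{k+1}` have coordinates homogeneous polynomials of degree `d`,
lifting a dominant rational map of `ℙ^k`. If `H⁽ⁿ⁾` denotes the gcd of the coordinates of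
`F^{∘n}`, then for all `m, n ≥ 1`, `(H⁽ⁿ⁾)^{d^m}` divides `H⁽ⁿ⁺ᵐ⁾`. -/
theorem gcd_iterate_divides
    (d : ℕ) (hd : 2 ≤ d)
    (F : Fin (k + 1) → MvPolynomial (Fin (k + 1)) ℂ)
    (hhom : ∀ i, (F i).IsHomogeneous d)
    (hdom : ∃ i, F i ≠ 0)
    (n m : ℕ) (hn : 1 ≤ n) (hm : 1 ≤ m)
    (Hn Hnm : MvPolynomial (Fin (k + 1)) ℂ)
    (hHn : IsGCDOf Hn (polyIter F n)) (hHnm : IsGCDOf Hnm (polyIter F (n + m))) :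
    Hn ^ d ^ m ∣ Hnm :=
  gcd_iterate_divides_general d F hhom n m Hn Hnm hHn hHnm
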